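/- arXiv:1404.3869 — 2 statements merged into one kernel-verified Lean document; each statement's English description precedes it below -/
import Mathlib

section
/- The algebra structure defined on F₀[S] ⊕ M_{X×X}(A) is associative; that is, for all matrix units a_{x,y}, b_{z,t} (a ∈ A, x,y,z,t ∈ X) and all s ∈ S, one has (a_{x,y}·s)·b_{z,t} = a_{x,y}·(s·b_{z,t}). -/
open scoped Classical

section

/- `S` is a semigroup with zero `s₀`, acting on the left and on the right on a pointed
set `X` with zero `x₀`; `A` is an `F`-algebra.  Matrices over `A` with rows and columns
indexed by `X` (with finitely many nonzero entries) are represented as functions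
`X → X → A`; `unit a x y` is the matrix with `a` in position `(x,y)` and zeros elsewhere,
and products are given by the usual matrix multiplication (a finite sum). -/

variable {S X A F : Type} [Semigroup S] [Field F] [Ring A] [Algebra F A]

/-- The matrix unit `a_{x,y}`. -/
noncomputable def unit (a : A) (x y : X) : X → X → A :=
  fun x' y' => if x' = x ∧ y' = y then a else 0

/-- Matrix multiplication (the inner sum is finite for the matrices we consider). -/
noncomputable def matMul (M N : X → X → A) : X → X → A :=
  fun x t => ∑ᶠ y : X, M x y * N y t

/-- The left action `s · a_{x,y}`: it is `a_{sx,y}` if `sx ≠ x₀` and `0` otherwise. -/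
noncomputable def lmul (lact : S → X → X) (x₀ : X) (s : S) (a : A) (x y : X) : X → X → A :=
  if lact s x = x₀ then 0 else unit a (lact s x) y

/-- The right action `a_{x,y} · s`: it is `a_{x,ys}` if `ys ≠ x₀` and `0` otherwise. -/
noncomputable def rmul (ract : X → S → X) (x₀ : X) (a : A) (x y : X) (s : S) : X → X → A :=
  if ract y s = x₀ then 0 else unit a x (ract y s)

lemma matMul_zero_left (N : X → X → A) : matMul (0 : X → X → A) N = 0 := by
  funext x t; simp [matMul]

lemma matMul_zero_right (M : X → X → A) : matMul M (0 : X → X → A) = 0 := by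
  funext x t; simp [matMul]

lemma matMul_unit_unit (a b : A) (u v z t : X) :
    matMul (unit a u v) (unit b z t) =
      if v = z then unit (a * b) u t else 0 := by
  funext x' t'
  simp only [matMul, unit]
  rw [finsum_eq_single _ v (by intro y' hy'; simp [hy'])]
  by_cases h : v = z <;> by_cases hx : x' = u <;> by_cases ht : t' = t <;>
    simp [h, hx, ht, unit]

/-- Under the compatibility conditions (1) and (2) on the two actions of
the semigroup `S` on the pointed set `X`, the multiplication on `F₀[S] ⊕ M_{X×X}(A)` is
associative: for all matrix units `a_{x,y}`, `b_{z,t}` and all `s ∈ S`,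
`(a_{x,y} · s) · b_{z,t} = a_{x,y} · (s · b_{z,t})`. -/
theorem stmt0
    (s₀ : S) (hs₀l : ∀ s : S, s₀ * s = s₀) (hs₀r : ∀ s : S, s * s₀ = s₀)
    (lact : S → X → X) (ract : X → S → X)
    (hl : ∀ s₁ s₂ : S, ∀ x : X, lact s₁ (lact s₂ x) = lact (s₁ * s₂) x)
    (hr : ∀ s₁ s₂ : S, ∀ x : X, ract (ract x s₁) s₂ = ract x (s₁ * s₂))
    (x₀ : X)
    (hx₀l : ∀ s : S, lact s x₀ = x₀) (hx₀r : ∀ s : S, ract x₀ s = x₀)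
    (hxs₀l : ∀ x : X, lact s₀ x = x₀) (hxs₀r : ∀ x : X, ract x s₀ = x₀)
    (h1 : ∀ (s : S) (x : X),
      (lact s (ract x s) = x₀ → ract x s = x₀) ∧
      (lact s (ract x s) ≠ x₀ → lact s (ract x s) = x))
    (h2 : ∀ (s : S) (x : X),
      (ract (lact s x) s = x₀ → lact s x = x₀) ∧
      (ract (lact s x) s ≠ x₀ → ract (lact s x) s = x))
    (a b : A) (x y z t : X) (s : S) :
    matMul (rmul ract x₀ a x y s) (unit b z t) =
      matMul (unit a x y) (lmul lact x₀ s b z t) := by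
  unfold rmul lmul
  by_cases hys : ract y s = x₀
  · simp only [hys, if_pos rfl, matMul_zero_left]
    by_cases hsz : lact s z = x₀
    · simp [hsz, matMul_zero_left, matMul_zero_right]
    · rw [if_neg hsz, matMul_unit_unit]
      have hne : y ≠ lact s z := by
        intro he
        exact hsz ((h2 s z).1 (by rw [← he]; exact hys))
      simp [hne, matMul_zero_left]
  · rw [if_neg hys, matMul_unit_unit]
    by_cases hz : ract y s = z
    · have h1' := h1 s y
      have hne : lact s (ract y s) ≠ x₀ := fun h => hys (h1'.1 h)
      have heq : lact s (ract y s) = y := h1'.2 hne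
      rw [if_pos hz, ← hz]
      rw [if_neg hne, heq, matMul_unit_unit, if_pos rfl]
    · rw [if_neg hz]
      by_cases hsz : lact s z = x₀
      · simp [hsz, matMul_zero_left, matMul_zero_right]
      · rw [if_neg hsz, matMul_unit_unit]
        have hne : y ≠ lact s z := by
          intro he
          have h2' := h2 s z
          have : ract (lact s z) s ≠ x₀ := by rw [← he]; exact hys
          exact hz (by rw [he]; exact h2'.2 this)
        simp [hne, matMul_zero_left]

end
end

section
/- For a row-finite directed graph Γ, the set S = {pq* : p, q paths in Γ with r(p) = r(q)} ∪ {0} is a subsemigroup (with zero) of the multiplicative semigroup of the Cohn algebra C(Γ), and C(Γ) is the reduced semigroup algebra F₀[S]. -/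
open scoped Classical

/-- A (row-finite) directed graph. -/
structure DGraph : Type 1 where
  V : Type
  E : Type
  src : E → V
  rng : E → V

namespace DGraph

variable (G : DGraph)

/-- `Chain u l w` : the list of edges `l` forms a path from `u` to `w`. -/
inductive Chain : G.V → List G.E → G.V → Prop
  | nil (v : G.V) : Chain v [] v
  | cons {e : G.E} {u : G.V} {l : List G.E} {w : G.V} :
      G.src e = u → Chain (G.rng e) l w → Chain u (e :: l) w

/-- Generators of the Cohn algebra: vertices, edges and ghost edges. -/
inductive Gen : Type
  | vert : G.V → Gen
  | edge : G.E → Gen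
  | ghost : G.E → Gen

variable (F : Type) [Field F]

/-- Shorthand for the canonical generators of the free algebra. -/
noncomputable abbrev gi (x : G.Gen) : FreeAlgebra F G.Gen := FreeAlgebra.ι F x

/-- The defining relations of the Cohn algebra of a graph. -/
inductive CohnRel : FreeAlgebra F G.Gen → FreeAlgebra F G.Gen → Prop
  | idem (v : G.V) : CohnRel (gi G F (.vert v) * gi G F (.vert v)) (gi G F (.vert v))
  | orth {v w : G.V} (h : v ≠ w) : CohnRel (gi G F (.vert v) * gi G F (.vert w)) 0
  | src_edge (e : G.E) : CohnRel (gi G F (.vert (G.src e)) * gi G F (.edge e)) (gi G F (.edge e))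
  | edge_rng (e : G.E) : CohnRel (gi G F (.edge e) * gi G F (.vert (G.rng e))) (gi G F (.edge e))
  | ghost_src (e : G.E) : CohnRel (gi G F (.ghost e) * gi G F (.vert (G.src e))) (gi G F (.ghost e))
  | rng_ghost (e : G.E) : CohnRel (gi G F (.vert (G.rng e)) * gi G F (.ghost e)) (gi G F (.ghost e))
  | ghost_edge_ne {e f : G.E} (h : e ≠ f) : CohnRel (gi G F (.ghost e) * gi G F (.edge f)) 0
  | ghost_edge (e : G.E) : CohnRel (gi G F (.ghost e) * gi G F (.edge e)) (gi G F (.vert (G.rng e)))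

/-- The Cohn algebra of the graph `G` over the field `F`. -/
noncomputable abbrev CohnAlgebra := RingQuot (G.CohnRel F)

noncomputable def cvert (v : G.V) : G.CohnAlgebra F :=
  RingQuot.mkAlgHom F (G.CohnRel F) (gi G F (.vert v))

noncomputable def cedge (e : G.E) : G.CohnAlgebra F :=
  RingQuot.mkAlgHom F (G.CohnRel F) (gi G F (.edge e))

noncomputable def cghost (e : G.E) : G.CohnAlgebra F :=
  RingQuot.mkAlgHom F (G.CohnRel F) (gi G F (.ghost e))

/-- The element of the Cohn algebra corresponding to the path starting at `u`
with list of edges `l` (for `l = []` this is the vertex `u`). -/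
noncomputable def cpath (u : G.V) (l : List G.E) : G.CohnAlgebra F :=
  G.cvert F u * (l.map (G.cedge F)).prod

/-- The ghost path `p*` corresponding to the path starting at `u` with edges `l`. -/
noncomputable def cstar (u : G.V) (l : List G.E) : G.CohnAlgebra F :=
  ((l.reverse).map (G.cghost F)).prod * G.cvert F u

/-- A vertex is a nonsink if some edge starts there. -/
def NonSink (v : G.V) : Prop := ∃ e : G.E, G.src e = v

/-- `CK(v)' = v - ∑_{s(e)=v} e e*`. -/
noncomputable def ckp [∀ v : G.V, Fintype {e : G.E // G.src e = v}] (v : G.V) :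
    G.CohnAlgebra F :=
  G.cvert F v - ∑ e : {e : G.E // G.src e = v}, G.cedge F e.1 * G.cghost F e.1

/-- The defining relations of the Leavitt path algebra: the Cohn relations together with
the Cuntz-Krieger relations at nonsink vertices. -/
inductive LeavittRel [∀ v : G.V, Fintype {e : G.E // G.src e = v}] :
    FreeAlgebra F G.Gen → FreeAlgebra F G.Gen → Prop
  | cohn {x y : FreeAlgebra F G.Gen} : G.CohnRel F x y → LeavittRel x y
  | ck (v : G.V) (h : G.NonSink v) :
      LeavittRel (∑ e : {e : G.E // G.src e = v}, gi G F (.edge e.1) * gi G F (.ghost e.1))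
        (gi G F (.vert v))

/-- The Leavitt path algebra of the row-finite graph `G` over `F`. -/
noncomputable abbrev Leavitt [∀ v : G.V, Fintype {e : G.E // G.src e = v}] :=
  RingQuot (G.LeavittRel F)

noncomputable def lvert [∀ v : G.V, Fintype {e : G.E // G.src e = v}] (v : G.V) :
    G.Leavitt F := RingQuot.mkAlgHom F (G.LeavittRel F) (gi G F (.vert v))

noncomputable def ledge [∀ v : G.V, Fintype {e : G.E // G.src e = v}] (e : G.E) :
    G.Leavitt F := RingQuot.mkAlgHom F (G.LeavittRel F) (gi G F (.edge e))

noncomputable def lghost [∀ v : G.V, Fintype {e : G.E // G.src e = v}] (e : G.E) :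
    G.Leavitt F := RingQuot.mkAlgHom F (G.LeavittRel F) (gi G F (.ghost e))

noncomputable def lpath [∀ v : G.V, Fintype {e : G.E // G.src e = v}] (u : G.V)
    (l : List G.E) : G.Leavitt F :=
  G.lvert F u * (l.map (G.ledge F)).prod

noncomputable def lstar [∀ v : G.V, Fintype {e : G.E // G.src e = v}] (u : G.V)
    (l : List G.E) : G.Leavitt F :=
  ((l.reverse).map (G.lghost F)).prod * G.lvert F u

end DGraph

namespace DGraph

variable (G : DGraph)

/-- Final vertex of an edge list started at `u`. -/
def dfin : G.V → List G.E → G.V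
  | u, [] => u
  | _, e :: l => dfin (G.rng e) l

/-- The edge list `l` is a valid path starting at `u`. -/
def Valid : G.V → List G.E → Prop
  | _, [] => True
  | u, e :: l => G.src e = u ∧ Valid (G.rng e) l

variable {G}

@[simp] lemma dfin_nil (u : G.V) : G.dfin u [] = u := rfl

@[simp] lemma dfin_cons (u : G.V) (e : G.E) (l : List G.E) :
    G.dfin u (e :: l) = G.dfin (G.rng e) l := rfl

@[simp] lemma valid_nil (u : G.V) : G.Valid u [] := trivial

lemma valid_cons {u : G.V} {e : G.E} {l : List G.E} :
    G.Valid u (e :: l) ↔ G.src e = u ∧ G.Valid (G.rng e) l := Iff.rfl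

lemma valid_chain {l : List G.E} : ∀ {u}, G.Valid u l → G.Chain u l (G.dfin u l) := by
  induction l with
  | nil => exact fun _ => Chain.nil _
  | cons e l ih => exact fun hv => Chain.cons hv.1 (ih hv.2)

lemma chain_iff {u : G.V} {l : List G.E} {w : G.V} :
    G.Chain u l w ↔ G.Valid u l ∧ G.dfin u l = w := by
  constructor
  · intro h
    induction h with
    | nil v => exact ⟨trivial, rfl⟩
    | cons hsrc _ ih => exact ⟨⟨hsrc, ih.1⟩, ih.2⟩
  · rintro ⟨hv, rfl⟩
    exact valid_chain hv

lemma dfin_append (u : G.V) (l t : List G.E) :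
    G.dfin u (l ++ t) = G.dfin (G.dfin u l) t := by
  induction l generalizing u with
  | nil => rfl
  | cons e l ih => simp only [List.cons_append, dfin_cons]; exact ih (G.rng e)

lemma valid_append {u : G.V} {l t : List G.E} (hl : G.Valid u l)
    (ht : G.Valid (G.dfin u l) t) : G.Valid u (l ++ t) := by
  induction l generalizing u with
  | nil => exact ht
  | cons e l ih => exact ⟨hl.1, ih hl.2 ht⟩

lemma valid_append_right {u : G.V} {l t : List G.E} (h : G.Valid u (l ++ t)) :
    G.Valid (G.dfin u l) t := by
  induction l generalizing u with
  | nil => exact h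
  | cons e l ih => exact ih h.2

lemma valid_append_left {u : G.V} {l t : List G.E} (h : G.Valid u (l ++ t)) :
    G.Valid u l := by
  induction l generalizing u with
  | nil => trivial
  | cons e l ih => exact ⟨h.1, ih h.2⟩

variable (G)
variable (F : Type) [Field F]

lemma cv_cv (v : G.V) : G.cvert F v * G.cvert F v = G.cvert F v := by
  simp only [cvert, ← map_mul]
  exact RingQuot.mkAlgHom_rel F (CohnRel.idem v)

lemma cv_cv_ne {v w : G.V} (h : v ≠ w) : G.cvert F v * G.cvert F w = 0 := by
  simp only [cvert, ← map_mul]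
  rw [RingQuot.mkAlgHom_rel F (CohnRel.orth h), map_zero]

lemma cv_ce (e : G.E) : G.cvert F (G.src e) * G.cedge F e = G.cedge F e := by
  simp only [cvert, cedge, ← map_mul]
  exact RingQuot.mkAlgHom_rel F (CohnRel.src_edge e)

lemma ce_cv (e : G.E) : G.cedge F e * G.cvert F (G.rng e) = G.cedge F e := by
  simp only [cvert, cedge, ← map_mul]
  exact RingQuot.mkAlgHom_rel F (CohnRel.edge_rng e)

lemma cg_cv (e : G.E) : G.cghost F e * G.cvert F (G.src e) = G.cghost F e := by
  simp only [cvert, cghost, ← map_mul]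
  exact RingQuot.mkAlgHom_rel F (CohnRel.ghost_src e)

lemma cv_cg (e : G.E) : G.cvert F (G.rng e) * G.cghost F e = G.cghost F e := by
  simp only [cvert, cghost, ← map_mul]
  exact RingQuot.mkAlgHom_rel F (CohnRel.rng_ghost e)

lemma cg_ce_ne {e f : G.E} (h : e ≠ f) : G.cghost F e * G.cedge F f = 0 := by
  simp only [cedge, cghost, ← map_mul]
  rw [RingQuot.mkAlgHom_rel F (CohnRel.ghost_edge_ne h), map_zero]

lemma cg_ce (e : G.E) : G.cghost F e * G.cedge F e = G.cvert F (G.rng e) := by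
  simp only [cvert, cedge, cghost, ← map_mul]
  exact RingQuot.mkAlgHom_rel F (CohnRel.ghost_edge e)

/-- The product of the edge generators along a list. -/
noncomputable def epr (l : List G.E) : G.CohnAlgebra F := (l.map (G.cedge F)).prod

/-- The product of the ghost generators along the reverse of a list. -/
noncomputable def gpr (l : List G.E) : G.CohnAlgebra F := (l.reverse.map (G.cghost F)).prod

lemma cpath_def (u : G.V) (l : List G.E) :
    G.cpath F u l = G.cvert F u * G.epr F l := rfl

lemma cstar_def (u : G.V) (l : List G.E) :
    G.cstar F u l = G.gpr F l * G.cvert F u := rfl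

lemma epr_cons (e : G.E) (l : List G.E) :
    G.epr F (e :: l) = G.cedge F e * G.epr F l := by simp [epr]

lemma gpr_cons (e : G.E) (l : List G.E) :
    G.gpr F (e :: l) = G.gpr F l * G.cghost F e := by simp [gpr]

@[simp] lemma cpath_nil (u : G.V) : G.cpath F u [] = G.cvert F u := by
  simp [cpath, epr]

@[simp] lemma cstar_nil (u : G.V) : G.cstar F u [] = G.cvert F u := by
  simp [cstar, gpr]

lemma cpath_cons (u : G.V) (e : G.E) (l : List G.E) :
    G.cpath F u (e :: l) = G.cvert F u * (G.cedge F e * G.cpath F (G.rng e) l) := by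
  have h : G.cedge F e * G.cpath F (G.rng e) l = G.cedge F e * G.epr F l := by
    rw [cpath_def, ← mul_assoc, ce_cv]
  rw [h, cpath_def, epr_cons, ← mul_assoc]

lemma cstar_cons (w : G.V) (f : G.E) (l : List G.E) :
    G.cstar F w (f :: l) = G.cstar F (G.rng f) l * (G.cghost F f * G.cvert F w) := by
  have h : G.cstar F (G.rng f) l * (G.cghost F f * G.cvert F w)
      = G.gpr F l * (G.cghost F f * G.cvert F w) := by
    rw [cstar_def, mul_assoc, ← mul_assoc (G.cvert F (G.rng f)), cv_cg]
  rw [h, cstar_def, gpr_cons, mul_assoc]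

lemma cpath_vert {u : G.V} {l : List G.E} (h : G.Valid u l) :
    G.cpath F u l * G.cvert F (G.dfin u l) = G.cpath F u l := by
  induction l generalizing u with
  | nil => simpa using G.cv_cv F u
  | cons e l ih =>
      rw [dfin_cons, cpath_cons]
      simp only [mul_assoc]
      rw [ih h.2]

lemma vert_cstar {u : G.V} {l : List G.E} (h : G.Valid u l) :
    G.cvert F (G.dfin u l) * G.cstar F u l = G.cstar F u l := by
  induction l generalizing u with
  | nil => simpa using G.cv_cv F u
  | cons e l ih =>
      rw [dfin_cons, cstar_cons, ← mul_assoc, ih h.2]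

lemma vert_cpath (u : G.V) (l : List G.E) :
    G.cvert F u * G.cpath F u l = G.cpath F u l := by
  rw [cpath_def, ← mul_assoc, cv_cv]

lemma cstar_vert (u : G.V) (l : List G.E) :
    G.cstar F u l * G.cvert F u = G.cstar F u l := by
  rw [cstar_def, mul_assoc, cv_cv]

lemma cpath_append {u : G.V} {l : List G.E} (t : List G.E) (h : G.Valid u l) :
    G.cpath F u l * G.cpath F (G.dfin u l) t = G.cpath F u (l ++ t) := by
  induction l generalizing u with
  | nil => simpa using G.vert_cpath F u t
  | cons e l ih =>
      rw [dfin_cons, List.cons_append, cpath_cons, cpath_cons]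
      simp only [mul_assoc]
      rw [ih h.2]

lemma cstar_append {u : G.V} {l : List G.E} (t : List G.E) (h : G.Valid u l) :
    G.cstar F (G.dfin u l) t * G.cstar F u l = G.cstar F u (l ++ t) := by
  have h1 : G.cstar F u (l ++ t) = G.gpr F t * G.cstar F u l := by
    simp only [cstar_def, gpr, List.reverse_append, List.map_append, List.prod_append,
      mul_assoc]
  rw [h1, cstar_def, mul_assoc, G.vert_cstar F h]

end DGraph

namespace DGraph

variable (G : DGraph) (F : Type) [Field F]

lemma star_path_ne {w u : G.V} (h : w ≠ u) (lq lp : List G.E) :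
    G.cstar F w lq * G.cpath F u lp = 0 := by
  rw [cstar_def, cpath_def, mul_assoc, ← mul_assoc (G.cvert F w), G.cv_cv_ne F h,
    zero_mul, mul_zero]

lemma star_path_red {g f : G.E} {lq lp : List G.E} {w : G.V} (hw : G.src g = w) :
    G.cstar F w (f :: lq) * G.cpath F w (g :: lp) =
      G.cstar F (G.rng f) lq * (G.cghost F f * G.cedge F g * G.cpath F (G.rng g) lp) := by
  subst hw
  rw [cstar_cons, cpath_cons]
  simp only [mul_assoc]
  rw [← mul_assoc (G.cvert F (G.src g)) (G.cvert F (G.src g)), G.cv_cv F,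
    ← mul_assoc (G.cvert F (G.src g)) (G.cedge F g), G.cv_ce F]

lemma star_mul_path : ∀ (lq lp : List G.E) (w : G.V), G.Valid w lq → G.Valid w lp →
    (∃ t, lp = lq ++ t ∧
      G.cstar F w lq * G.cpath F w lp = G.cpath F (G.dfin w lq) t) ∨
    (∃ s, lq = lp ++ s ∧
      G.cstar F w lq * G.cpath F w lp = G.cstar F (G.dfin w lp) s) ∨
    G.cstar F w lq * G.cpath F w lp = 0 := by
  intro lq
  induction lq with
  | nil =>
      intro lp w _ _
      left
      exact ⟨lp, rfl, by rw [cstar_nil, vert_cpath, dfin_nil]⟩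
  | cons f lq ih =>
      intro lp w hq hp
      cases lp with
      | nil =>
          right; left
          exact ⟨f :: lq, rfl, by rw [cpath_nil, cstar_vert, dfin_nil]⟩
      | cons g lp =>
          by_cases hfg : f = g
          · subst hfg
            have hmid : G.cstar F w (f :: lq) * G.cpath F w (f :: lp) =
                G.cstar F (G.rng f) lq * G.cpath F (G.rng f) lp := by
              rw [G.star_path_red F hp.1, G.cg_ce F, vert_cpath]
            rcases ih lp (G.rng f) hq.2 hp.2 with ⟨t, ht, heq⟩ | ⟨s, hs, heq⟩ | heq
            · left
              exact ⟨t, by rw [ht, List.cons_append], by rw [hmid, heq, dfin_cons]⟩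
            · right; left
              exact ⟨s, by rw [hs, List.cons_append], by rw [hmid, heq, dfin_cons]⟩
            · right; right
              rw [hmid, heq]
          · right; right
            rw [G.star_path_red F hp.1, G.cg_ce_ne F hfg, zero_mul, mul_zero]

lemma prod_mem {u w z u' w' z' : G.V} {lp lq lp' lq' : List G.E}
    (h1 : G.Chain u lp z) (h2 : G.Chain w lq z)
    (h3 : G.Chain u' lp' z') (h4 : G.Chain w' lq' z') :
    (G.cpath F u lp * G.cstar F w lq) * (G.cpath F u' lp' * G.cstar F w' lq') = 0 ∨
    ∃ (a b c : G.V) (la lb : List G.E), G.Chain a la c ∧ G.Chain b lb c ∧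
      (G.cpath F u lp * G.cstar F w lq) * (G.cpath F u' lp' * G.cstar F w' lq') =
        G.cpath F a la * G.cstar F b lb := by
  obtain ⟨hvp, hdp⟩ := chain_iff.mp h1
  obtain ⟨hvq, hdq⟩ := chain_iff.mp h2
  obtain ⟨hvp', hdp'⟩ := chain_iff.mp h3
  obtain ⟨hvq', hdq'⟩ := chain_iff.mp h4
  have hassoc : (G.cpath F u lp * G.cstar F w lq) * (G.cpath F u' lp' * G.cstar F w' lq') =
      G.cpath F u lp * (G.cstar F w lq * G.cpath F u' lp') * G.cstar F w' lq' := by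
    simp only [mul_assoc]
  by_cases hwu : w = u'
  · subst hwu
    rcases G.star_mul_path F lq lp' w hvq hvp' with ⟨t, ht, heq⟩ | ⟨s, hs, heq⟩ | heq
    · right
      refine ⟨u, w', G.dfin w' lq', lp ++ t, lq', ?_, valid_chain hvq', ?_⟩
      · have hvt : G.Valid z t := by
          rw [← hdq]; exact valid_append_right (ht ▸ hvp')
        have : G.dfin u (lp ++ t) = G.dfin w' lq' := by
          rw [dfin_append, hdp, hdq', ← hdp', ht, dfin_append, hdq]
        rw [chain_iff]
        exact ⟨valid_append hvp (hdp ▸ hvt), this⟩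
      · rw [hassoc, heq, hdq, ← hdp, G.cpath_append F t hvp]
    · right
      refine ⟨u, w', G.dfin w (lp' ++ s), lp, lq' ++ s, ?_, ?_, ?_⟩
      · rw [chain_iff]
        refine ⟨hvp, ?_⟩
        rw [hdp, ← hs, hdq]
      · have hvs : G.Valid (G.dfin w lp') s := valid_append_right (hs ▸ hvq)
        rw [chain_iff]
        refine ⟨valid_append hvq' ?_, ?_⟩
        · rw [hdq', ← hdp']; exact hvs
        · rw [dfin_append, hdq', ← hdp', ← dfin_append, ← hs]
      · have : G.dfin w lp' = G.dfin w' lq' := by rw [hdp', hdq']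
        rw [hassoc, heq, this, mul_assoc, G.cstar_append F s hvq']
    · left
      rw [hassoc, heq, mul_zero, zero_mul]
  · left
    rw [hassoc, G.star_path_ne F hwu, mul_zero, zero_mul]

lemma cvert_eq (v : G.V) : G.cpath F v [] * G.cstar F v [] = G.cvert F v := by
  rw [cpath_nil, cstar_nil, cv_cv]

lemma cedge_eq (e : G.E) :
    G.cpath F (G.src e) [e] * G.cstar F (G.rng e) [] = G.cedge F e := by
  rw [cstar_nil, cpath_cons, cpath_nil]
  simp only [mul_assoc]
  rw [G.cv_cv F, G.ce_cv F, G.cv_ce F]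

lemma cghost_eq (e : G.E) :
    G.cpath F (G.rng e) [] * G.cstar F (G.src e) [e] = G.cghost F e := by
  rw [cpath_nil, cstar_cons, cstar_nil, ← mul_assoc, G.cv_cv F, ← mul_assoc,
    G.cv_cg F, G.cg_cv F]

end DGraph

namespace DGraph

variable (G : DGraph)

/-- Index type for the basis of the representation space: pairs of paths with common range. -/
structure BSet where
  u : G.V
  lp : List G.E
  w : G.V
  lq : List G.E
  hp : G.Valid u lp
  hq : G.Valid w lq
  he : G.dfin u lp = G.dfin w lq

variable {G}

lemma BSet.ext' {b b' : G.BSet} (h1 : b.u = b'.u) (h2 : b.lp = b'.lp)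
    (h3 : b.w = b'.w) (h4 : b.lq = b'.lq) : b = b' := by
  cases b; cases b'
  dsimp at h1 h2 h3 h4
  subst h1; subst h2; subst h3; subst h4
  rfl

variable (G) (F : Type) [Field F]

noncomputable def actV (v : G.V) (b : G.BSet) : G.BSet →₀ F :=
  if v = b.u then Finsupp.single b 1 else 0

noncomputable def actE (e : G.E) (b : G.BSet) : G.BSet →₀ F :=
  if h : G.rng e = b.u then
    Finsupp.single ⟨G.src e, e :: b.lp, b.w, b.lq, ⟨rfl, by rw [h]; exact b.hp⟩, b.hq,
      by rw [dfin_cons, h]; exact b.he⟩ 1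
  else 0

noncomputable def actG (e : G.E) : G.BSet → (G.BSet →₀ F)
  | ⟨u, [], w, lq, _, hq, he⟩ =>
      if h : G.src e = u then
        Finsupp.single ⟨G.rng e, [], w, lq ++ [e], trivial,
          valid_append hq ⟨h.trans he, trivial⟩, by simp [dfin_append]⟩ 1
      else 0
  | ⟨_, f :: lp, w, lq, hp, hq, he⟩ =>
      if h : e = f then
        Finsupp.single ⟨G.rng e, lp, w, lq, by rw [h]; exact hp.2, hq,
          by rw [h]; exact he⟩ 1
      else 0

noncomputable def act : G.Gen → G.BSet → (G.BSet →₀ F)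
  | .vert v => G.actV F v
  | .edge e => G.actE F e
  | .ghost e => G.actG F e

noncomputable def actL (g : G.Gen) : (G.BSet →₀ F) →ₗ[F] (G.BSet →₀ F) :=
  Finsupp.lift (G.BSet →₀ F) F G.BSet (G.act F g)

lemma actL_single (g : G.Gen) (b : G.BSet) :
    G.actL F g (Finsupp.single b 1) = G.act F g b := by
  simp [actL, Finsupp.lift_apply, Finsupp.sum_single_index]

noncomputable def phi0 : FreeAlgebra F G.Gen →ₐ[F] Module.End F (G.BSet →₀ F) :=
  FreeAlgebra.lift F (G.actL F)

lemma phi0_gi (g : G.Gen) : G.phi0 F (gi G F g) = G.actL F g := by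
  simp only [phi0, gi]
  exact FreeAlgebra.lift_ι_apply _ _

lemma end_ext {φ ψ : (G.BSet →₀ F) →ₗ[F] (G.BSet →₀ F)}
    (h : ∀ b, φ (Finsupp.single b 1) = ψ (Finsupp.single b 1)) : φ = ψ := by
  apply Finsupp.lhom_ext
  intro a c
  have hc : (Finsupp.single a c : G.BSet →₀ F) = c • Finsupp.single a 1 := by
    simp [Finsupp.smul_single]
  rw [hc, map_smul, map_smul, h]

lemma rel_hold {x y : FreeAlgebra F G.Gen} (h : G.CohnRel F x y) :
    G.phi0 F x = G.phi0 F y := by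
  cases h with
  | idem v =>
      simp only [map_mul, phi0_gi]
      apply end_ext
      intro b
      by_cases h : v = b.u <;>
        simp [Module.End.mul_apply, actL_single, act, actV, h]
  | orth hvw =>
      rename_i v w
      simp only [map_mul, map_zero, phi0_gi]
      apply end_ext
      intro b
      by_cases h : w = b.u
      · subst h
        simp [Module.End.mul_apply, actL_single, act, actV, hvw]
      · simp [Module.End.mul_apply, actL_single, act, actV, h]
  | src_edge e =>
      simp only [map_mul, phi0_gi]
      apply end_ext
      intro b
      by_cases h : G.rng e = b.u <;>
        simp [Module.End.mul_apply, actL_single, act, actV, actE, h]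
  | edge_rng e =>
      simp only [map_mul, phi0_gi]
      apply end_ext
      intro b
      by_cases h : G.rng e = b.u <;>
        simp [Module.End.mul_apply, actL_single, act, actV, actE, h]
  | ghost_src e =>
      simp only [map_mul, phi0_gi]
      apply end_ext
      intro b
      obtain ⟨u, lp, w, lq, hp, hq, he⟩ := b
      cases lp with
      | nil =>
          by_cases h : G.src e = u <;>
            simp [Module.End.mul_apply, actL_single, act, actV, actG, h]
      | cons f lp =>
          by_cases hef : e = f
          · subst hef
            simp [Module.End.mul_apply, actL_single, act, actV, actG, hp.1]
          · by_cases h : G.src e = u <;>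
              simp [Module.End.mul_apply, actL_single, act, actV, actG, h, hef]
  | rng_ghost e =>
      simp only [map_mul, phi0_gi]
      apply end_ext
      intro b
      obtain ⟨u, lp, w, lq, hp, hq, he⟩ := b
      cases lp with
      | nil =>
          by_cases h : G.src e = u <;>
            simp [Module.End.mul_apply, actL_single, act, actV, actG, h]
      | cons f lp =>
          by_cases hef : e = f <;>
            simp [Module.End.mul_apply, actL_single, act, actV, actG, hef]
  | ghost_edge_ne hef =>
      rename_i e f
      simp only [map_mul, map_zero, phi0_gi]
      apply end_ext
      intro b
      by_cases h : G.rng f = b.u <;>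
        simp [Module.End.mul_apply, actL_single, act, actE, actG, h, hef]
  | ghost_edge e =>
      simp only [map_mul, phi0_gi]
      apply end_ext
      intro b
      obtain ⟨u, lp, w, lq, hp, hq, he⟩ := b
      by_cases h : G.rng e = u
      · subst h
        simp [Module.End.mul_apply, actL_single, act, actV, actE, actG]
      · simp [Module.End.mul_apply, actL_single, act, actV, actE, actG, h]

noncomputable def phi : G.CohnAlgebra F →ₐ[F] Module.End F (G.BSet →₀ F) :=
  RingQuot.liftAlgHom F ⟨G.phi0 F, fun _ _ h => G.rel_hold F h⟩

lemma phi_cvert (v : G.V) : G.phi F (G.cvert F v) = G.actL F (.vert v) := by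
  simp only [phi, cvert, RingQuot.liftAlgHom_mkAlgHom_apply]
  exact G.phi0_gi F _

lemma phi_cedge (e : G.E) : G.phi F (G.cedge F e) = G.actL F (.edge e) := by
  simp only [phi, cedge, RingQuot.liftAlgHom_mkAlgHom_apply]
  exact G.phi0_gi F _

lemma phi_cghost (e : G.E) : G.phi F (G.cghost F e) = G.actL F (.ghost e) := by
  simp only [phi, cghost, RingQuot.liftAlgHom_mkAlgHom_apply]
  exact G.phi0_gi F _

lemma phi_cvert_single (v : G.V) (b : G.BSet) :
    G.phi F (G.cvert F v) (Finsupp.single b 1) = G.actV F v b := by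
  rw [phi_cvert, actL_single]; rfl

lemma phi_cedge_single (e : G.E) (b : G.BSet) :
    G.phi F (G.cedge F e) (Finsupp.single b 1) = G.actE F e b := by
  rw [phi_cedge, actL_single]; rfl

lemma phi_cghost_single (e : G.E) (b : G.BSet) :
    G.phi F (G.cghost F e) (Finsupp.single b 1) = G.actG F e b := by
  rw [phi_cghost, actL_single]; rfl

end DGraph

namespace DGraph

variable (G : DGraph) (F : Type) [Field F]

lemma actG_nil (e : G.E) (u w : G.V) (lq : List G.E) (hp : G.Valid u [])
    (hq : G.Valid w lq) (he : G.dfin u [] = G.dfin w lq) :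
    G.actG F e ⟨u, [], w, lq, hp, hq, he⟩ =
      if h : G.src e = u then
        Finsupp.single ⟨G.rng e, [], w, lq ++ [e], trivial,
          valid_append hq ⟨h.trans he, trivial⟩, by simp [dfin_append]⟩ 1
      else 0 := rfl

lemma actG_cons (e f : G.E) (u w : G.V) (lp lq : List G.E)
    (hp : G.Valid u (f :: lp)) (hq : G.Valid w lq)
    (he : G.dfin u (f :: lp) = G.dfin w lq) :
    G.actG F e ⟨u, f :: lp, w, lq, hp, hq, he⟩ =
      if h : e = f then
        Finsupp.single ⟨G.rng e, lp, w, lq, by rw [h]; exact hp.2, hq,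
          by rw [h]; exact he⟩ 1
      else 0 := rfl

lemma phi_cpath_single {u : G.V} {l : List G.E} (hl : G.Valid u l) (b : G.BSet)
    (hb : b.u = G.dfin u l) :
    G.phi F (G.cpath F u l) (Finsupp.single b 1) =
      Finsupp.single (⟨u, l ++ b.lp, b.w, b.lq, valid_append hl (hb ▸ b.hp), b.hq,
        by rw [dfin_append, ← hb]; exact b.he⟩ : G.BSet) 1 := by
  induction l generalizing u b with
  | nil =>
      rw [cpath_nil, phi_cvert_single, actV, if_pos (hb.trans (dfin_nil u)).symm]
      congr 1
      exact BSet.ext' (hb.trans (dfin_nil u)) rfl rfl rfl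
  | cons e l ih =>
      rw [cpath_cons]
      simp only [map_mul, Module.End.mul_apply]
      rw [ih hl.2 b (by rw [hb, dfin_cons]), phi_cedge_single, actE, dif_pos rfl,
        phi_cvert_single, actV, if_pos hl.1.symm]
      congr 1
      exact BSet.ext' hl.1 rfl rfl rfl

lemma phi_cstar_strip : ∀ (lq : List G.E) (w : G.V) (t : List G.E) (bw : G.V)
    (blq : List G.E) (hbp : G.Valid w (lq ++ t)) (hbq : G.Valid bw blq)
    (hbe : G.dfin w (lq ++ t) = G.dfin bw blq),
    G.phi F (G.cstar F w lq) (Finsupp.single (⟨w, lq ++ t, bw, blq, hbp, hbq, hbe⟩ : G.BSet) 1) =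
      Finsupp.single (⟨G.dfin w lq, t, bw, blq, valid_append_right hbp, hbq,
        by rw [← dfin_append]; exact hbe⟩ : G.BSet) 1 := by
  intro lq
  induction lq with
  | nil =>
      intro w t bw blq hbp hbq hbe
      rw [cstar_nil, phi_cvert_single, actV, if_pos rfl]
      congr 1
  | cons f lq ih =>
      intro w t bw blq hbp hbq hbe
      show G.phi F (G.cstar F w (f :: lq))
        (Finsupp.single (⟨w, f :: (lq ++ t), bw, blq, hbp, hbq, hbe⟩ : G.BSet) 1) = _
      rw [cstar_cons]
      simp only [map_mul, Module.End.mul_apply]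
      rw [phi_cvert_single, actV, if_pos rfl, phi_cghost_single, actG_cons,
        dif_pos rfl, ih]
      congr 1

lemma phi_cstar_ne {w : G.V} (lq : List G.E) {b : G.BSet} (h : w ≠ b.u) :
    G.phi F (G.cstar F w lq) (Finsupp.single b 1) = 0 := by
  rw [cstar_def, map_mul, Module.End.mul_apply, phi_cvert_single, actV, if_neg h,
    map_zero]

lemma phi_cstar_cases (w : G.V) (lq : List G.E) (b : G.BSet) :
    G.phi F (G.cstar F w lq) (Finsupp.single b 1) = 0 ∨
    ∃ b' : G.BSet, G.phi F (G.cstar F w lq) (Finsupp.single b 1) = Finsupp.single b' 1 ∧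
      b'.w = b.w ∧ ((b'.lq = b.lq ∧ b.lp = lq ++ b'.lp) ∨ b.lq.length < b'.lq.length) := by
  induction lq generalizing w b with
  | nil =>
      by_cases h : w = b.u
      · rw [cstar_nil, phi_cvert_single, actV, if_pos h]
        exact Or.inr ⟨b, rfl, rfl, Or.inl ⟨rfl, rfl⟩⟩
      · rw [cstar_nil, phi_cvert_single, actV, if_neg h]
        exact Or.inl rfl
  | cons f lq ih =>
      rw [cstar_cons]
      simp only [map_mul, Module.End.mul_apply]
      by_cases h : w = b.u
      · rw [phi_cvert_single, actV, if_pos h]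
        obtain ⟨bu, blp, bw, blq, hbp, hbq, hbe⟩ := b
        cases blp with
        | nil =>
            rw [phi_cghost_single, actG_nil]
            by_cases hsf : G.src f = bu
            · rw [dif_pos hsf]
              rcases ih (G.rng f) _ with h0 | ⟨b', hb', hw', hcase⟩
              · exact Or.inl h0
              · refine Or.inr ⟨b', hb', hw', Or.inr ?_⟩
                rcases hcase with ⟨hlq, _⟩ | hlen
                · rw [hlq]; simp
                · refine lt_trans ?_ hlen
                  simp
            · rw [dif_neg hsf, map_zero]
              exact Or.inl rfl
        | cons g blp =>
            rw [phi_cghost_single, actG_cons]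
            by_cases hfg : f = g
            · subst hfg
              rw [dif_pos rfl]
              rcases ih (G.rng f) _ with h0 | ⟨b', hb', hw', hcase⟩
              · exact Or.inl h0
              · refine Or.inr ⟨b', hb', hw', ?_⟩
                rcases hcase with ⟨hlq, hlp⟩ | hlen
                · exact Or.inl ⟨hlq, by rw [List.cons_append, ← hlp]⟩
                · exact Or.inr hlen
            · rw [dif_neg hfg, map_zero]
              exact Or.inl rfl
      · rw [phi_cvert_single, actV, if_neg h, map_zero, map_zero]
        exact Or.inl rfl

lemma phi_cpath_cases (u : G.V) (lp : List G.E) (b : G.BSet) :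
    G.phi F (G.cpath F u lp) (Finsupp.single b 1) = 0 ∨
    ∃ b' : G.BSet, G.phi F (G.cpath F u lp) (Finsupp.single b 1) = Finsupp.single b' 1 ∧
      b'.w = b.w ∧ b'.lq = b.lq := by
  induction lp generalizing u b with
  | nil =>
      by_cases h : u = b.u
      · rw [cpath_nil, phi_cvert_single, actV, if_pos h]
        exact Or.inr ⟨b, rfl, rfl, rfl⟩
      · rw [cpath_nil, phi_cvert_single, actV, if_neg h]
        exact Or.inl rfl
  | cons e lp ih =>
      rw [cpath_cons]
      simp only [map_mul, Module.End.mul_apply]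
      rcases ih (G.rng e) b with h0 | ⟨b', hb', hw', hq'⟩
      · rw [h0, map_zero, map_zero]
        exact Or.inl rfl
      · rw [hb']
        by_cases h : G.rng e = b'.u
        · rw [phi_cedge_single, actE, dif_pos h]
          by_cases h2 : u = G.src e
          · rw [phi_cvert_single, actV, if_pos h2]
            exact Or.inr ⟨_, rfl, hw', hq'⟩
          · rw [phi_cvert_single, actV, if_neg h2]
            exact Or.inl rfl
        · rw [phi_cedge_single, actE, dif_neg h, map_zero]
          exact Or.inl rfl

end DGraph

namespace DGraph

variable (G : DGraph) (F : Type) [Field F]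

lemma mem_closure_gens (u w : G.V) (lp lq : List G.E) :
    G.cpath F u lp * G.cstar F w lq ∈ Subsemigroup.closure
      (Set.range (G.cvert F) ∪ Set.range (G.cedge F) ∪ Set.range (G.cghost F)) := by
  set K := Subsemigroup.closure
    (Set.range (G.cvert F) ∪ Set.range (G.cedge F) ∪ Set.range (G.cghost F)) with hK
  have hv : ∀ v, G.cvert F v ∈ K := fun v =>
    Subsemigroup.subset_closure (Or.inl (Or.inl ⟨v, rfl⟩))
  have hce : ∀ e, G.cedge F e ∈ K := fun e =>
    Subsemigroup.subset_closure (Or.inl (Or.inr ⟨e, rfl⟩))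
  have hcg : ∀ e, G.cghost F e ∈ K := fun e =>
    Subsemigroup.subset_closure (Or.inr ⟨e, rfl⟩)
  have he' : ∀ (l : List G.E) (x), x ∈ K → G.epr F l * x ∈ K := by
    intro l
    induction l with
    | nil => intro x hx; simpa [epr] using hx
    | cons e l ih =>
        intro x hx
        rw [epr_cons, mul_assoc]
        exact mul_mem (hce e) (ih x hx)
  have hg' : ∀ (l : List G.E) (x), x ∈ K → G.gpr F l * x ∈ K := by
    intro l
    induction l with
    | nil => intro x hx; simpa [gpr] using hx
    | cons e l ih =>
        intro x hx
        rw [gpr_cons, mul_assoc]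
        exact ih _ (mul_mem (hcg e) hx)
  have heq : G.cpath F u lp * G.cstar F w lq =
      G.cvert F u * (G.epr F lp * (G.gpr F lq * G.cvert F w)) := by
    rw [cpath_def, cstar_def]
    simp only [mul_assoc]
  rw [heq]
  exact mul_mem (hv u) (he' _ _ (hg' _ _ (hv w)))

lemma eval_coeff {u w z u' w' z' : G.V} {lp lq lp' lq' : List G.E}
    (hvp : G.Valid u lp) (hvq : G.Valid w lq)
    (hdp : G.dfin u lp = z) (hdq : G.dfin w lq = z)
    (hvp' : G.Valid u' lp') (hvq' : G.Valid w' lq')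
    (hdp' : G.dfin u' lp' = z') (hdq' : G.dfin w' lq' = z')
    (hlen : lq.length ≤ lq'.length) :
    (G.phi F (G.cpath F u' lp' * G.cstar F w' lq')
        (Finsupp.single (⟨w, lq, w, lq, hvq, hvq, rfl⟩ : G.BSet) 1))
      (⟨u, lp, w, lq, hvp, hvq, hdp.trans hdq.symm⟩ : G.BSet)
      = if u' = u ∧ lp' = lp ∧ w' = w ∧ lq' = lq then 1 else 0 := by
  rw [map_mul, Module.End.mul_apply]
  by_cases hcond : u' = u ∧ lp' = lp ∧ w' = w ∧ lq' = lq
  · obtain ⟨h1, h2, h3, h4⟩ := hcond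
    subst h1; subst h2; subst h3; subst h4
    rw [if_pos ⟨rfl, rfl, rfl, rfl⟩]
    have pf1 : G.Valid w' (lq' ++ []) := by rw [List.append_nil]; exact hvq
    have pf2 : G.dfin w' (lq' ++ []) = G.dfin w' lq' := by rw [List.append_nil]
    rw [show Finsupp.single (⟨w', lq', w', lq', hvq, hvq, rfl⟩ : G.BSet) (1 : F) =
        Finsupp.single (⟨w', lq' ++ [], w', lq', pf1, hvq, pf2⟩ : G.BSet) 1 from by
      congr 1
      exact BSet.ext' rfl (List.append_nil _).symm rfl rfl]
    rw [G.phi_cstar_strip F lq' w' [] w' lq' pf1 hvq pf2]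
    rw [G.phi_cpath_single F hvp'
      (⟨G.dfin w' lq', [], w', lq', trivial, hvq, rfl⟩ : G.BSet)
      (hdq'.trans hdp'.symm)]
    rw [Finsupp.single_apply, if_pos ?_]
    exact BSet.ext' rfl (List.append_nil _) rfl rfl
  · rw [if_neg hcond]
    by_cases hww : w' = w
    · subst hww
      rcases G.phi_cstar_cases F w' lq' ⟨w', lq, w', lq, hvq, hvq, rfl⟩ with
        h0 | ⟨b1, hb1, hw1, hcase⟩
      · rw [h0, map_zero]
        rfl
      · rcases hcase with ⟨hlq1, hlp1⟩ | hlen2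
        · have hlg := congrArg List.length hlp1
          simp only [List.length_append] at hlg
          have hnil : b1.lp = [] := by
            have h5 : b1.lp.length = 0 := by
              have h6 : lq.length = lq'.length + b1.lp.length := hlg
              omega
            exact List.eq_nil_of_length_eq_zero h5
          rw [hnil, List.append_nil] at hlp1
          have hq' : lq' = lq := hlp1.symm
          subst hq'
          have pf1 : G.Valid w' (lq' ++ []) := by rw [List.append_nil]; exact hvq
          have pf2 : G.dfin w' (lq' ++ []) = G.dfin w' lq' := by rw [List.append_nil]
          rw [show Finsupp.single (⟨w', lq', w', lq', hvq, hvq, rfl⟩ : G.BSet) (1 : F) =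
              Finsupp.single (⟨w', lq' ++ [], w', lq', pf1, hvq, pf2⟩ : G.BSet) 1 from by
            congr 1
            exact BSet.ext' rfl (List.append_nil _).symm rfl rfl]
          rw [G.phi_cstar_strip F lq' w' [] w' lq' pf1 hvq pf2]
          rw [G.phi_cpath_single F hvp'
            (⟨G.dfin w' lq', [], w', lq', trivial, hvq, rfl⟩ : G.BSet)
            (hdq'.trans hdp'.symm)]
          rw [Finsupp.single_apply, if_neg ?_]
          intro hcon
          refine hcond ⟨congrArg BSet.u hcon, ?_, rfl, rfl⟩
          have h2' : lp' ++ [] = lp := congrArg BSet.lp hcon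
          rwa [List.append_nil] at h2'
        · rw [hb1]
          rcases G.phi_cpath_cases F u' lp' b1 with h0 | ⟨b2, hb2, hw2, hq2⟩
          · rw [h0]
            rfl
          · rw [hb2, Finsupp.single_apply, if_neg ?_]
            intro hcon
            have h3 : b2.lq = lq := congrArg BSet.lq hcon
            rw [hq2] at h3
            rw [h3] at hlen2
            exact absurd hlen2 (lt_irrefl _)
    · rw [G.phi_cstar_ne F lq' (by exact hww), map_zero]
      rfl

end DGraph


open DGraph

/-- For a row-finite directed graph `Γ`, the set
`S = {p q* : p, q paths in Γ with r(p) = r(q)} ∪ {0}` is a subsemigroup with zero of the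
multiplicative semigroup of the Cohn algebra `C(Γ)`, and `C(Γ)` is the reduced semigroup
algebra `F₀[S]`: the nonzero elements of `S` form a basis of `C(Γ)` over `F`. -/
theorem stmt1 (G : DGraph) (F : Type) [Field F]
    [∀ v : G.V, Fintype {e : G.E // G.src e = v}] :
    let S : Set (G.CohnAlgebra F) :=
      {x | x = 0 ∨ ∃ (u w z : G.V) (lp lq : List G.E),
        G.Chain u lp z ∧ G.Chain w lq z ∧ x = G.cpath F u lp * G.cstar F w lq}
    (0 : G.CohnAlgebra F) ∈ S ∧
    (∀ x ∈ S, ∀ y ∈ S, x * y ∈ S) ∧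
    Submodule.span F S =
      (NonUnitalAlgebra.adjoin F
        (Set.range (G.cvert F) ∪ Set.range (G.cedge F) ∪
          Set.range (G.cghost F))).toSubmodule ∧
    LinearIndependent F (fun x : (S \ {0} : Set (G.CohnAlgebra F)) => (x : G.CohnAlgebra F)) := by
  intro S
  have hS0 : (0 : G.CohnAlgebra F) ∈ S := Or.inl rfl
  have hmul : ∀ x ∈ S, ∀ y ∈ S, x * y ∈ S := by
    rintro x hx y hy
    rcases hx with rfl | ⟨u, w, z, lp, lq, h1, h2, rfl⟩
    · exact Or.inl (zero_mul y)
    · rcases hy with rfl | ⟨u', w', z', lp', lq', h3, h4, rfl⟩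
      · exact Or.inl (mul_zero _)
      · rcases G.prod_mem F h1 h2 h3 h4 with h0 | ⟨a, b, c, la, lb, ha, hb, heq⟩
        · exact Or.inl h0
        · exact Or.inr ⟨a, b, c, la, lb, ha, hb, heq⟩
  refine ⟨hS0, hmul, ?_, ?_⟩
  · rw [NonUnitalAlgebra.adjoin_eq_span]
    apply le_antisymm
    · rw [Submodule.span_le]
      intro x hx
      rcases hx with rfl | ⟨u, w, z, lp, lq, h1, h2, rfl⟩
      · exact zero_mem _
      · exact Submodule.subset_span (G.mem_closure_gens F u w lp lq)
    · rw [Submodule.span_le]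
      intro x hx
      refine Submodule.subset_span ?_
      have hsub : Subsemigroup.closure
          (Set.range (G.cvert F) ∪ Set.range (G.cedge F) ∪ Set.range (G.cghost F)) ≤
          ⟨S, fun {a b} ha hb => hmul a ha b hb⟩ := by
        rw [Subsemigroup.closure_le]
        rintro y ((⟨v, rfl⟩ | ⟨e, rfl⟩) | ⟨e, rfl⟩)
        · exact Or.inr ⟨v, v, v, [], [], Chain.nil v, Chain.nil v, (G.cvert_eq F v).symm⟩
        · exact Or.inr ⟨G.src e, G.rng e, G.rng e, [e], [],
            Chain.cons rfl (Chain.nil _), Chain.nil _, (G.cedge_eq F e).symm⟩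
        · exact Or.inr ⟨G.rng e, G.src e, G.rng e, [], [e],
            Chain.nil _, Chain.cons rfl (Chain.nil _), (G.cghost_eq F e).symm⟩
      exact hsub hx
  · rw [linearIndependent_iff]
    intro l hl
    by_contra hlne
    have hrep : ∀ x : ↥(S \ {0} : Set (G.CohnAlgebra F)), ∃ u w z lp lq,
        G.Chain u lp z ∧ G.Chain w lq z ∧
          (x : G.CohnAlgebra F) = G.cpath F u lp * G.cstar F w lq := by
      intro x
      rcases x.2.1 with h0 | h
      · exact absurd h0 x.2.2
      · exact h
    choose fu fw fz flp flq hc1 hc2 hval using hrep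
    have hsupp : l.support.Nonempty := Finsupp.support_nonempty_iff.mpr hlne
    obtain ⟨x₀, hx₀, hmin⟩ := l.support.exists_min_image (fun x => (flq x).length) hsupp
    obtain ⟨hvp₀, hdp₀⟩ := chain_iff.mp (hc1 x₀)
    obtain ⟨hvq₀, hdq₀⟩ := chain_iff.mp (hc2 x₀)
    let b₀ : G.BSet := ⟨fu x₀, flp x₀, fw x₀, flq x₀, hvp₀, hvq₀, hdp₀.trans hdq₀.symm⟩
    let T : G.BSet →₀ F := Finsupp.single ⟨fw x₀, flq x₀, fw x₀, flq x₀, hvq₀, hvq₀, rfl⟩ 1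
    let ev : G.CohnAlgebra F →ₗ[F] F :=
      (Finsupp.lapply b₀).comp ((LinearMap.applyₗ T).comp (G.phi F).toLinearMap)
    have hev : ∀ x : ↥(S \ {0} : Set (G.CohnAlgebra F)), x ∈ l.support →
        ev ↑x = if fu x = fu x₀ ∧ flp x = flp x₀ ∧ fw x = fw x₀ ∧ flq x = flq x₀
          then 1 else 0 := by
      intro x hx
      obtain ⟨hvpx, hdpx⟩ := chain_iff.mp (hc1 x)
      obtain ⟨hvqx, hdqx⟩ := chain_iff.mp (hc2 x)
      have hcoeff := G.eval_coeff F hvp₀ hvq₀ hdp₀ hdq₀ hvpx hvqx hdpx hdqx (hmin x hx)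
      rw [show ev (↑x) = (G.phi F ↑x T) b₀ from rfl, hval x]
      exact hcoeff
    have h0 : ev (Finsupp.linearCombination F
        (fun x : ↥(S \ {0} : Set (G.CohnAlgebra F)) => (x : G.CohnAlgebra F)) l) = 0 := by
      rw [hl, map_zero]
    rw [Finsupp.linearCombination_apply, Finsupp.sum, map_sum] at h0
    have h1 : ∀ x ∈ l.support, x ≠ x₀ → ev (l x • (x : G.CohnAlgebra F)) = 0 := by
      intro x hx hne
      rw [map_smul, hev x hx, if_neg, smul_zero]
      rintro ⟨e1, e2, e3, e4⟩
      apply hne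
      apply Subtype.ext
      rw [hval x, hval x₀, e1, e2, e3, e4]
    rw [Finset.sum_eq_single x₀ h1 (fun h => absurd hx₀ h)] at h0
    rw [map_smul, hev x₀ hx₀, if_pos ⟨rfl, rfl, rfl, rfl⟩, smul_eq_mul, mul_one] at h0
    exact absurd h0 (Finsupp.mem_support_iff.mp hx₀)
end
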